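/- arXiv:1006.5909 — 2 statements merged into one kernel-verified Lean document; each statement's English description precedes it below -/
import Mathlib

section
/- Let m ≥ 5 be an integer, and let G ≤ GL(4,ℂ) be the subgroup generated by the 24 permutation matrices of the four coordinates together with all diagonal matrices diag(ε₁, ε₂, ε₃, ε₄) where each εᵢ is an m-th root of unity. Then every homogeneous polynomial in ℂ[x,y,u,v] of degree 4 that is a semi-invariant of G is a scalar multiple of the monomial xyuv; conversely, xyuv is a semi-invariant of G. -/
/-!
Scaling the `j`-th coordinate by a primitive `m`-th root of unity `ζ` multiplies a monomial
`x^α` by `ζ^(α j)`. For a semi-invariant `f` this factor is the same for every monomial of `f`,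
and since the exponents of a quartic are below `m ≥ 5`, all monomials of `f` coincide:
`f = c x^α`.
Semi-invariance under the coordinate permutations makes `α` symmetric, so `α = (1,1,1,1)`.
Conversely, permutations fix `xyuv` and `diag ε` multiplies it by `∏ εᵢ`; these scalars form a
character because each is determined by the value of `xyuv` at `(1,1,1,1)`.
-/

open Matrix MvPolynomial

/-- The subgroup of `GL(4, ℂ)` generated by the 24 permutation matrices of the four
coordinates together with all diagonal matrices whose entries are `m`-th roots of unity. -/
def fermatGroup (m : ℕ) : Subgroup (GL (Fin 4) ℂ) :=
  Subgroup.closure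
    {g | (∃ σ : Equiv.Perm (Fin 4),
        (g : Matrix (Fin 4) (Fin 4) ℂ) = Matrix.of fun i j => if i = σ j then 1 else 0) ∨
      (∃ ε : Fin 4 → ℂ, (∀ i, ε i ^ m = 1) ∧
        (g : Matrix (Fin 4) (Fin 4) ℂ) = Matrix.diagonal ε)}

section SemiInvariant

variable {ι K : Type*} [Fintype ι] [DecidableEq ι] [Field K]

def IsSemiInvariant (H : Subgroup (GL ι K)) (f : MvPolynomial ι K) : Prop :=
  ∃ χ : H →* Kˣ, ∀ (g : H) (v : ι → K),
    eval (((g : GL ι K)⁻¹ : GL ι K) *ᵥ v) f = (χ g : K) * eval v f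

lemma eval_mulVec_of_eval_inv_mulVec {f : MvPolynomial ι K} {g : GL ι K} {c : Kˣ}
    (h : ∀ v, eval ((g⁻¹ : GL ι K) *ᵥ v) f = c * eval v f) (v : ι → K) :
    eval ((g : Matrix ι ι K) *ᵥ v) f = (c⁻¹ : Kˣ) * eval v f := by
  rw [Units.val_inv_eq_inv_val, eq_inv_mul_iff_mul_eq₀ c.ne_zero, ← h, mulVec_mulVec,
    Units.inv_mul, one_mulVec]

lemma eval_inv_mulVec_of_eval_mulVec {f : MvPolynomial ι K} {g : GL ι K} {c : Kˣ}
    (h : ∀ v, eval ((g : Matrix ι ι K) *ᵥ v) f = c * eval v f) (v : ι → K) :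
    eval ((g⁻¹ : GL ι K) *ᵥ v) f = (c⁻¹ : Kˣ) * eval v f := by
  rw [Units.val_inv_eq_inv_val, eq_inv_mul_iff_mul_eq₀ c.ne_zero, ← h, mulVec_mulVec,
    Units.mul_inv, one_mulVec]

def semiInvariantSubgroup (f : MvPolynomial ι K) : Subgroup (GL ι K) where
  carrier := {g | ∃ c : Kˣ, ∀ v, eval ((g : Matrix ι ι K) *ᵥ v) f = c * eval v f}
  one_mem' := ⟨1, by simp⟩
  mul_mem' := by
    rintro a b ⟨ca, hca⟩ ⟨cb, hcb⟩
    refine ⟨ca * cb, fun v => ?_⟩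
    rw [Units.val_mul, ← mulVec_mulVec, hca, hcb, Units.val_mul, mul_assoc]
  inv_mem' := by
    rintro a ⟨c, hc⟩
    exact ⟨c⁻¹, eval_inv_mulVec_of_eval_mulVec hc⟩

lemma IsSemiInvariant.le_semiInvariantSubgroup {H : Subgroup (GL ι K)} {f : MvPolynomial ι K}
    (hf : IsSemiInvariant H f) : H ≤ semiInvariantSubgroup f := by
  obtain ⟨χ, hχ⟩ := hf
  exact fun g hg => ⟨_, eval_mulVec_of_eval_inv_mulVec (hχ ⟨g, hg⟩)⟩

lemma isSemiInvariant_of_le_semiInvariantSubgroup {H : Subgroup (GL ι K)}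
    {f : MvPolynomial ι K} {v₀ : ι → K} (h₀ : eval v₀ f ≠ 0)
    (hH : H ≤ semiInvariantSubgroup f) : IsSemiInvariant H f := by
  choose c hc using fun g : H => hH g.2
  have hmul (a b : H) : c (a * b) = c a * c b := by
    refine Units.ext (mul_right_cancel₀ h₀ ?_)
    rw [← hc, Subgroup.coe_mul, Units.val_mul, ← mulVec_mulVec, hc, hc, Units.val_mul,
      mul_assoc]
  exact ⟨MonoidHom.mk' (fun g => (c g)⁻¹) fun a b => by rw [hmul, mul_inv],
    fun g => eval_inv_mulVec_of_eval_mulVec (hc g)⟩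

end SemiInvariant

section Coefficients

variable {ι R : Type*} [CommRing R]

lemma eval_aeval_C_mul_X (s w : ι → R) (f : MvPolynomial ι R) :
    eval w (aeval (fun i => C (s i) * X i) f) = eval (s * w) f := by
  rw [aeval_eq_bind₁, eval, eval₂Hom_bind₁]
  simp [Pi.mul_def]

lemma MvPolynomial.IsHomogeneous.apply_le_of_mem_support {f : MvPolynomial ι R} {d : ℕ}
    (hf : f.IsHomogeneous d) {α : ι →₀ ℕ} (hα : α ∈ f.support) (i : ι) : α i ≤ d :=
  hf.degree_eq_sum_deg_support hα ▸ Finsupp.le_degree i α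

variable [Fintype ι]

lemma aeval_C_mul_X_monomial (s : ι → R) (α : ι →₀ ℕ) (a : R) :
    aeval (fun i => C (s i) * X i) (monomial α a) = monomial α ((∏ i, s i ^ α i) * a) := by
  simp only [monomial_eq, Finsupp.prod_fintype _ _ fun _ => pow_zero _, map_mul, map_prod,
    map_pow, aeval_C, aeval_X, algebraMap_eq, mul_pow, Finset.prod_mul_distrib]
  ring

lemma coeff_aeval_C_mul_X (s : ι → R) (f : MvPolynomial ι R) (α : ι →₀ ℕ) :
    coeff α (aeval (fun i => C (s i) * X i) f) = (∏ i, s i ^ α i) * coeff α f := by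
  induction f using MvPolynomial.induction_on' with
  | monomial β a =>
    classical
    rw [aeval_C_mul_X_monomial, coeff_monomial, coeff_monomial]
    split_ifs with h
    · rw [h]
    · rw [mul_zero]
  | add p q hp hq => rw [map_add, coeff_add, coeff_add, hp, hq, mul_add]

end Coefficients

section SupportOfSemiInvariant

variable {ι K : Type*} [Field K] [Infinite K] {f : MvPolynomial ι K} {α : ι →₀ ℕ}

lemma mapDomain_mem_support_of_eval_comp {σ : Equiv.Perm ι} {c : K}
    (h : ∀ w, eval (w ∘ σ) f = c * eval w f) (hα : α ∈ f.support) :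
    Finsupp.mapDomain σ α ∈ f.support := by
  have hrename : rename σ f = C c * f :=
    MvPolynomial.funext fun w => by rw [eval_rename, h, map_mul, eval_C]
  have := congrArg (coeff (Finsupp.mapDomain σ α)) hrename
  rw [coeff_rename_mapDomain σ σ.injective, coeff_C_mul] at this
  exact mem_support_iff.mpr (right_ne_zero_of_mul (this ▸ mem_support_iff.mp hα))

variable [Fintype ι]

lemma prod_pow_eq_of_eval_mul {s : ι → K} {c : K} (h : ∀ w, eval (s * w) f = c * eval w f)
    (hα : α ∈ f.support) : ∏ i, s i ^ α i = c := by
  have hscale : aeval (fun i => C (s i) * X i) f = C c * f :=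
    MvPolynomial.funext fun w => by rw [eval_aeval_C_mul_X, h, map_mul, eval_C]
  have := congrArg (coeff α) hscale
  rw [coeff_aeval_C_mul_X, coeff_C_mul] at this
  exact mul_right_cancel₀ (mem_support_iff.mp hα) this

lemma apply_eq_of_eval_mulSingle_mul [DecidableEq ι] {ζ : K} {m d : ℕ}
    (hζ : IsPrimitiveRoot ζ m) (hdm : d < m) (hf : f.IsHomogeneous d) {j : ι} {c : K}
    (h : ∀ w, eval (Pi.mulSingle j ζ * w) f = c * eval w f) {β : ι →₀ ℕ}
    (hα : α ∈ f.support) (hβ : β ∈ f.support) : α j = β j := by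
  have hpow (γ : ι →₀ ℕ) (hγ : γ ∈ f.support) : ζ ^ γ j = c := by
    rw [← prod_pow_eq_of_eval_mul h hγ, Fintype.prod_eq_single j fun i hi => by simp [hi]]
    simp
  exact hζ.pow_inj ((hf.apply_le_of_mem_support hα j).trans_lt hdm)
    ((hf.apply_le_of_mem_support hβ j).trans_lt hdm) ((hpow α hα).trans (hpow β hβ).symm)

end SupportOfSemiInvariant

section SymmetricExponents

variable {ι : Type*} [DecidableEq ι] {α : ι →₀ ℕ}

lemma Finsupp.apply_eq_of_forall_mapDomain_eq (h : ∀ σ : Equiv.Perm ι, mapDomain σ α = α)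
    (i j : ι) : α i = α j := by
  have := mapDomain_apply (Equiv.swap i j).injective α j
  rwa [h, Equiv.swap_apply_right] at this

lemma Finsupp.apply_eq_one_of_forall_mapDomain_eq [Fintype ι]
    (h : ∀ σ : Equiv.Perm ι, mapDomain σ α = α) (hdeg : α.degree = Fintype.card ι)
    (i : ι) : α i = 1 := by
  have hsum : ∑ j, α j = ∑ _j : ι, α i :=
    Finset.sum_congr rfl fun j _ => apply_eq_of_forall_mapDomain_eq h j i
  rw [degree_eq_sum, hsum, Finset.sum_const, Finset.card_univ, smul_eq_mul] at hdeg
  exact Nat.eq_of_mul_eq_mul_left (Fintype.card_pos_iff.2 ⟨i⟩) (hdeg.trans (mul_one _).symm)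

end SymmetricExponents

section FermatGroup

lemma of_eq_permMatrix {n R : Type*} [DecidableEq n] [Zero R] [One R] (σ : Equiv.Perm n) :
    (Matrix.of fun i j => if i = σ j then (1 : R) else 0) = σ⁻¹.permMatrix R := by
  ext i j
  simp [PEquiv.toMatrix_apply, Equiv.Perm.inv_def, Equiv.eq_symm_apply, eq_comm]

variable {n K : Type*} [Fintype n] [DecidableEq n] [Field K]

def permGL : Equiv.Perm n →* GL n K :=
  Matrix.permMatrixHom.toHomUnits

lemma permGL_mulVec (σ : Equiv.Perm n) (v : n → K) :
    ((permGL σ : GL n K) : Matrix n n K) *ᵥ v = v ∘ ⇑σ⁻¹ :=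
  permMatrix_mulVec _

def diagonalGL (u : n → Kˣ) : GL n K :=
  ⟨diagonal fun i => u i, diagonal fun i => ↑(u i)⁻¹, by simp, by simp⟩

lemma diagonalGL_mulVec (u : n → Kˣ) (v : n → K) :
    (diagonalGL u : Matrix n n K) *ᵥ v = (fun i => (u i : K)) * v :=
  funext fun i => mulVec_diagonal _ _ i

lemma permGL_mem_fermatGroup (m : ℕ) (σ : Equiv.Perm (Fin 4)) : permGL σ ∈ fermatGroup m :=
  Subgroup.subset_closure (Or.inl ⟨σ, (of_eq_permMatrix σ).symm⟩)

lemma diagonalGL_mem_fermatGroup {m : ℕ} {u : Fin 4 → ℂˣ} (hu : ∀ i, u i ^ m = 1) :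
    diagonalGL u ∈ fermatGroup m :=
  Subgroup.subset_closure
    (Or.inr ⟨fun i => u i,
      fun i => by rw [← Units.val_pow_eq_pow_val, hu, Units.val_one], rfl⟩)

end FermatGroup

lemma eval_X_mul_X_mul_X_mul_X {R : Type*} [CommRing R] (v : Fin 4 → R) :
    eval v (X 0 * X 1 * X 2 * X 3 : MvPolynomial (Fin 4) R) = ∏ i, v i := by
  simp [Fin.prod_univ_four]

lemma X_mul_X_mul_X_mul_X_eq_monomial {R : Type*} [CommSemiring R] {α : Fin 4 →₀ ℕ}
    (h : ∀ i, α i = 1) : (X 0 * X 1 * X 2 * X 3 : MvPolynomial (Fin 4) R) = monomial α 1 := by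
  rw [monomial_eq, Finsupp.prod_fintype _ _ fun _ => pow_zero _]
  simp [Fin.prod_univ_four, h, mul_assoc]

theorem isSemiInvariant_X_mul_X_mul_X_mul_X (m : ℕ) :
    IsSemiInvariant (fermatGroup m) (X 0 * X 1 * X 2 * X 3) := by
  refine isSemiInvariant_of_le_semiInvariantSubgroup (v₀ := 1) (by simp)
    ((Subgroup.closure_le _).2 ?_)
  rintro g (⟨σ, hσ⟩ | ⟨ε, -, hε⟩)
  · refine ⟨1, fun v => ?_⟩
    rw [hσ, of_eq_permMatrix, permMatrix_mulVec, eval_X_mul_X_mul_X_mul_X,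
      eval_X_mul_X_mul_X_mul_X, Units.val_one, one_mul]
    exact Equiv.prod_comp _ v
  · have hdet := isUnits_det_units g
    rw [hε, det_diagonal] at hdet
    refine ⟨hdet.unit, fun v => ?_⟩
    rw [hε, IsUnit.unit_spec, eval_X_mul_X_mul_X_mul_X, eval_X_mul_X_mul_X_mul_X,
      ← Finset.prod_mul_distrib]
    simp only [mulVec_diagonal]

section SemiInvariantOfFermatGroup

variable {m : ℕ} {f : MvPolynomial (Fin 4) ℂ}

lemma IsSemiInvariant.eq_of_mem_support {d : ℕ} (hdm : d < m) (hf : f.IsHomogeneous d)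
    (hinv : IsSemiInvariant (fermatGroup m) f) {α β : Fin 4 →₀ ℕ} (hα : α ∈ f.support)
    (hβ : β ∈ f.support) : α = β := by
  have hζ := Complex.isPrimitiveRoot_exp m (by omega)
  ext j
  let u : Fin 4 → ℂˣ := Pi.mulSingle j (hζ.isUnit (by omega)).unit
  obtain ⟨c, hc⟩ := hinv.le_semiInvariantSubgroup (diagonalGL_mem_fermatGroup (u := u)
    fun i => by by_cases hi : i = j <;> simp [u, hi, ← Units.val_inj, hζ.pow_eq_one])
  refine apply_eq_of_eval_mulSingle_mul hζ hdm hf (c := c) (fun w => ?_) hα hβ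
  rw [← hc, diagonalGL_mulVec]
  congr 2
  ext i
  by_cases hi : i = j <;> simp [u, hi]

lemma IsSemiInvariant.mapDomain_mem_support (hinv : IsSemiInvariant (fermatGroup m) f)
    (σ : Equiv.Perm (Fin 4)) {α : Fin 4 →₀ ℕ} (hα : α ∈ f.support) :
    Finsupp.mapDomain σ α ∈ f.support := by
  obtain ⟨c, hc⟩ := hinv.le_semiInvariantSubgroup (permGL_mem_fermatGroup m σ⁻¹)
  exact mapDomain_mem_support_of_eval_comp (fun w => by rw [← hc, permGL_mulVec, inv_inv]) hα

theorem IsSemiInvariant.eq_smul_X_mul_X_mul_X_mul_X (hm : 5 ≤ m) (hf : f.IsHomogeneous 4)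
    (hinv : IsSemiInvariant (fermatGroup m) f) :
    ∃ c : ℂ, f = c • (X 0 * X 1 * X 2 * X 3) := by
  rcases eq_or_ne f 0 with rfl | hf0
  · exact ⟨0, (zero_smul ℂ _).symm⟩
  obtain ⟨α, hα⟩ := support_nonempty.mpr hf0
  have hsupp (β) (hβ : β ∈ f.support) : β = α := hinv.eq_of_mem_support hm hf hβ hα
  have hone : ∀ i, α i = 1 :=
    Finsupp.apply_eq_one_of_forall_mapDomain_eq
      (fun σ => hsupp _ (hinv.mapDomain_mem_support σ hα))
      (hf.degree_eq_sum_deg_support hα).symm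
  refine ⟨coeff α f, ?_⟩
  rw [X_mul_X_mul_X_mul_X_eq_monomial hone, smul_monomial, smul_eq_mul, mul_one]
  exact eq_monomial_of_support_subset_singleton hsupp

end SemiInvariantOfFermatGroup

/-- For `m ≥ 5`, every degree-4 homogeneous semi-invariant of the group
generated by the coordinate permutation matrices and the diagonal matrices with `m`-th root
of unity entries is a scalar multiple of `xyuv`; conversely, `xyuv` is a semi-invariant. -/
theorem stmt_11 (m : ℕ) (hm : 5 ≤ m) :
    (∀ f : MvPolynomial (Fin 4) ℂ, f.IsHomogeneous 4 →
      (∃ χ : fermatGroup m →* ℂˣ, ∀ (g : fermatGroup m) (v : Fin 4 → ℂ),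
        MvPolynomial.eval
            (Matrix.mulVec (((g : GL (Fin 4) ℂ)⁻¹ : GL (Fin 4) ℂ) : Matrix (Fin 4) (Fin 4) ℂ) v) f
          = (χ g : ℂ) * MvPolynomial.eval v f) →
      ∃ c : ℂ, f = c • (X 0 * X 1 * X 2 * X 3)) ∧
    (∃ χ : fermatGroup m →* ℂˣ, ∀ (g : fermatGroup m) (v : Fin 4 → ℂ),
      MvPolynomial.eval
          (Matrix.mulVec (((g : GL (Fin 4) ℂ)⁻¹ : GL (Fin 4) ℂ) : Matrix (Fin 4) (Fin 4) ℂ) v)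
          (X 0 * X 1 * X 2 * X 3 : MvPolynomial (Fin 4) ℂ)
        = (χ g : ℂ) * MvPolynomial.eval v (X 0 * X 1 * X 2 * X 3 : MvPolynomial (Fin 4) ℂ)) :=
  ⟨fun _ hf hinv => IsSemiInvariant.eq_smul_X_mul_X_mul_X_mul_X hm hf hinv,
    isSemiInvariant_X_mul_X_mul_X_mul_X m⟩
end

section
/- Let m, n ≥ 3 be odd integers, let ζ_k = e^{2πi/k}, let J = [[0,1],[−1,0]], A = diag(ζ₄ₙ², ζ₄ₙ⁻²), B = diag(ζ₄ₘ², ζ₄ₘ⁻²), C = diag(ζ₄ₙⁿ, ζ₄ₙ⁻ⁿ), D = diag(ζ₄ₘᵐ, ζ₄ₘ⁻ᵐ), and identify ℂ⁴ with ℂ² ⊗ ℂ², with GL(2,ℂ) × GL(2,ℂ) acting via Kronecker products X ⊗ Y. Then: (1) the subgroup G₁ ≤ GL(4,ℂ) generated by A ⊗ I, I ⊗ B, C ⊗ D and J ⊗ J acts reducibly on ℂ⁴ — indeed it preserves the two-dimensional subspaces span{e₁⊗e₂, e₂⊗e₁} and span{e₁⊗e₁, e₂⊗e₂}; whereas (2)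 the subgroup G₂ ≤ GL(4,ℂ) generated by A ⊗ I, I ⊗ B, C ⊗ J and J ⊗ D acts irreducibly on ℂ⁴. -/
/-!
Every generator is a Kronecker product of monomial matrices (diagonal ones and `J`), so it sends
`eᵢ ⊗ eⱼ` to a nonzero multiple of `e_{σ i} ⊗ e_{τ j}`. In the first group `σ` and `τ` are both
the identity or both the swap, so the parity of `i + j` is preserved and the two planes are
invariant. In the second group, `A ⊗ I` and `I ⊗ B` are diagonal and their eigenvalue pairs
`(ζ₄ₙ^{±2}, ζ₄ₘ^{±2})` separate the four basis vectors (as `ζ₄ₙ⁴ ≠ 1`), so a nonzero invariant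
subspace contains some `eᵢ ⊗ eⱼ`; then `C ⊗ J` and `J ⊗ D` flip the second and the first index,
reaching every basis vector.
-/

open Matrix Kronecker

noncomputable def zeta (k : ℕ) : ℂ := Complex.exp (2 * Real.pi * Complex.I / k)

/-- `A = diag(ζ₄ₙ², ζ₄ₙ⁻²)` (and `B = diag(ζ₄ₘ², ζ₄ₘ⁻²)` is `Amat m`). -/
noncomputable def Amat (n : ℕ) : Matrix (Fin 2) (Fin 2) ℂ :=
  Matrix.diagonal ![zeta (4 * n) ^ 2, (zeta (4 * n) ^ 2)⁻¹]

/-- `C = diag(ζ₄ₙⁿ, ζ₄ₙ⁻ⁿ)` (and `D = diag(ζ₄ₘᵐ, ζ₄ₘ⁻ᵐ)` is `Cmat m`). -/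
noncomputable def Cmat (n : ℕ) : Matrix (Fin 2) (Fin 2) ℂ :=
  Matrix.diagonal ![zeta (4 * n) ^ n, (zeta (4 * n) ^ n)⁻¹]

def Jmat : Matrix (Fin 2) (Fin 2) ℂ := !![0, 1; -1, 0]

/-- The group of Example `eg:intrans`: generated by `A ⊗ I`, `I ⊗ B`, `C ⊗ D`, `J ⊗ J`. -/
noncomputable def intransGroup (m n : ℕ) : Subgroup (GL (Fin 2 × Fin 2) ℂ) :=
  Subgroup.closure
    {g | (g : Matrix (Fin 2 × Fin 2) (Fin 2 × Fin 2) ℂ) = Amat n ⊗ₖ (1 : Matrix (Fin 2) (Fin 2) ℂ) ∨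
      (g : Matrix (Fin 2 × Fin 2) (Fin 2 × Fin 2) ℂ) = (1 : Matrix (Fin 2) (Fin 2) ℂ) ⊗ₖ Amat m ∨
      (g : Matrix (Fin 2 × Fin 2) (Fin 2 × Fin 2) ℂ) = Cmat n ⊗ₖ Cmat m ∨
      (g : Matrix (Fin 2 × Fin 2) (Fin 2 × Fin 2) ℂ) = Jmat ⊗ₖ Jmat}

/-- The group of Example `eg:trans`: generated by `A ⊗ I`, `I ⊗ B`, `C ⊗ J`, `J ⊗ D`. -/
noncomputable def transGroup (m n : ℕ) : Subgroup (GL (Fin 2 × Fin 2) ℂ) :=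
  Subgroup.closure
    {g | (g : Matrix (Fin 2 × Fin 2) (Fin 2 × Fin 2) ℂ) = Amat n ⊗ₖ (1 : Matrix (Fin 2) (Fin 2) ℂ) ∨
      (g : Matrix (Fin 2 × Fin 2) (Fin 2 × Fin 2) ℂ) = (1 : Matrix (Fin 2) (Fin 2) ℂ) ⊗ₖ Amat m ∨
      (g : Matrix (Fin 2 × Fin 2) (Fin 2 × Fin 2) ℂ) = Cmat n ⊗ₖ Jmat ∨
      (g : Matrix (Fin 2 × Fin 2) (Fin 2 × Fin 2) ℂ) = Jmat ⊗ₖ Cmat m}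

section

variable {ι κ K : Type*} [Field K]

def IsMonomial (X : Matrix ι ι K) (σ : ι → ι) : Prop :=
  ∀ i k, X k i ≠ 0 ↔ k = σ i

lemma IsMonomial.kronecker {X : Matrix ι ι K} {σ : ι → ι} {Y : Matrix κ κ K} {τ : κ → κ}
    (hX : IsMonomial X σ) (hY : IsMonomial Y τ) : IsMonomial (X ⊗ₖ Y) (Prod.map σ τ) := by
  rintro ⟨i, j⟩ ⟨k, l⟩
  simp [kroneckerMap_apply, hX i k, hY j l, Prod.ext_iff]

variable [DecidableEq ι]

lemma isMonomial_diagonal {d : ι → K} (hd : ∀ i, d i ≠ 0) : IsMonomial (diagonal d) id := by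
  intro i k
  by_cases h : k = i <;> simp [h, hd]

lemma single_one_mem_of_single_mem {W : Submodule K (ι → K)} {i : ι} {c : K} (hc : c ≠ 0)
    (h : Pi.single i c ∈ W) : Pi.single i 1 ∈ W := by
  simpa [← Pi.single_smul, hc] using W.smul_mem c⁻¹ h

lemma single_one_mem_span_image_iff {S : Set ι} {i : ι} :
    Pi.single i (1 : K) ∈ Submodule.span K ((fun j => Pi.single j (1 : K)) '' S) ↔ i ∈ S := by
  refine ⟨fun h => ?_, fun h => Submodule.subset_span ⟨i, h, rfl⟩⟩
  by_contra hi
  have hker : Submodule.span K ((fun j => Pi.single j (1 : K)) '' S) ≤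
      LinearMap.ker (LinearMap.proj i) := by
    rw [Submodule.span_le]
    rintro _ ⟨j, hj, rfl⟩
    simp [show i ≠ j by rintro rfl; exact hi hj]
  simpa using hker h

lemma isMonomial_one : IsMonomial (1 : Matrix ι ι K) id :=
  isMonomial_diagonal fun _ => one_ne_zero

lemma diagonal_kronecker_one [DecidableEq κ] (d : ι → K) :
    diagonal d ⊗ₖ (1 : Matrix κ κ K) = diagonal fun q => d q.1 := by
  rw [← diagonal_one, diagonal_kronecker_diagonal]
  simp

lemma one_kronecker_diagonal [DecidableEq κ] (d : κ → K) :
    (1 : Matrix ι ι K) ⊗ₖ diagonal d = diagonal fun q => d q.2 := by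
  rw [← diagonal_one, diagonal_kronecker_diagonal]
  simp

variable [Fintype ι]

def invariantSubgroup (W : Submodule K (ι → K)) : Subgroup (GL ι K) where
  carrier := {g | ∀ v ∈ W, (g : Matrix ι ι K) *ᵥ v ∈ W}
  one_mem' := by simp
  mul_mem' {g h} hg hh v hv := by simpa [Matrix.mulVec_mulVec] using hg _ (hh v hv)
  inv_mem' {g} hg v hv := by
    let e : (ι → K) ≃ₗ[K] (ι → K) :=
      LinearMap.GeneralLinearGroup.generalLinearEquiv K _ (GeneralLinearGroup.toLin g)
    have he (w : ι → K) : e w = (g : Matrix ι ι K) *ᵥ w := rfl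
    -- `g` maps `W` into itself, hence onto itself by a dimension count
    have hWe : W.map (e : (ι → K) →ₗ[K] (ι → K)) = W := Submodule.eq_of_le_of_finrank_eq
      (Submodule.map_le_iff_le_comap.mpr fun w hw => by simpa [he] using hg w hw)
      (e.finrank_map_eq W)
    obtain ⟨w, hw, rfl⟩ := hWe.ge hv
    simpa [he, Matrix.mulVec_mulVec] using hw

lemma mulVec_mem_of_generator {s : Set (GL ι K)} {W : Submodule K (ι → K)}
    (hW : ∀ g ∈ Subgroup.closure s, ∀ v ∈ W, (g : Matrix ι ι K) *ᵥ v ∈ W)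
    {M : Matrix ι ι K} (hM : M.det ≠ 0) (hMs : GeneralLinearGroup.mkOfDetNeZero M hM ∈ s) :
    ∀ v ∈ W, M *ᵥ v ∈ W :=
  hW _ (Subgroup.subset_closure hMs)

lemma eq_top_of_forall_single_one_mem {W : Submodule K (ι → K)}
    (h : ∀ i, Pi.single i (1 : K) ∈ W) : W = ⊤ :=
  eq_top_iff.mpr <| (Pi.basisFun K ι).span_eq.ge.trans <| Submodule.span_le.mpr <| by
    rintro _ ⟨i, rfl⟩
    simpa using h i

lemma indicator_mem_of_diagonal_mulVec_mem {W : Submodule K (ι → K)} {d : ι → K}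
    (hW : ∀ v ∈ W, diagonal d *ᵥ v ∈ W) {v : ι → K} (hv : v ∈ W) (c : K) :
    {i | d i = c}.indicator v ∈ W := by
  classical
  have hprod (S : Finset K) : (fun i => (∏ x ∈ S, (d i - x)) * v i) ∈ W := by
    induction S using Finset.induction_on with
    | empty => simpa using hv
    | insert x S hx ih =>
      have hstep : (fun i => (∏ y ∈ insert x S, (d i - y)) * v i) =
          diagonal d *ᵥ (fun i => (∏ y ∈ S, (d i - y)) * v i) -
            x • (fun i => (∏ y ∈ S, (d i - y)) * v i) := by
        ext i
        simp [Finset.prod_insert hx, mulVec_diagonal]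
        ring
      rw [hstep]
      exact W.sub_mem (hW _ ih) (W.smul_mem x ih)
  -- the product over the other eigenvalues kills every other eigenspace
  set T := (Finset.univ.image d).erase c
  have hκ : ∏ y ∈ T, (c - y) ≠ 0 :=
    Finset.prod_ne_zero_iff.mpr fun y hy => sub_ne_zero.mpr (Finset.ne_of_mem_erase hy).symm
  convert W.smul_mem (∏ y ∈ T, (c - y))⁻¹ (hprod T) using 1
  ext i
  by_cases hi : d i = c
  · simp [hi, hκ]
  · have hvanish : ∏ y ∈ T, (d i - y) = 0 :=
      Finset.prod_eq_zero (Finset.mem_erase.mpr ⟨hi, Finset.mem_image_of_mem d (Finset.mem_univ i)⟩)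
        (sub_self _)
    simp [hi, hvanish]

lemma single_mem_of_diagonal_mulVec_mem {W : Submodule K (ι → K)} {d₁ d₂ : ι → K}
    (hW₁ : ∀ v ∈ W, diagonal d₁ *ᵥ v ∈ W) (hW₂ : ∀ v ∈ W, diagonal d₂ *ᵥ v ∈ W)
    (hd : Function.Injective fun i => (d₁ i, d₂ i)) {v : ι → K} (hv : v ∈ W) (i : ι) :
    Pi.single i (v i) ∈ W := by
  have h := indicator_mem_of_diagonal_mulVec_mem hW₂
    (indicator_mem_of_diagonal_mulVec_mem hW₁ hv (d₁ i)) (d₂ i)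
  have hi : {j | d₂ j = d₂ i} ∩ {j | d₁ j = d₁ i} = {i} := by
    ext j
    simp only [Set.mem_inter_iff, Set.mem_ofPred_eq, Set.mem_singleton_iff]
    exact ⟨fun ⟨h₂, h₁⟩ => hd (Prod.ext h₁ h₂), by rintro rfl; simp⟩
  rwa [Set.indicator_indicator, hi, Set.indicator_singleton] at h

namespace IsMonomial

variable {X : Matrix ι ι K} {σ : ι → ι}

lemma mulVec_single (hX : IsMonomial X σ) (i : ι) (c : K) :
    X *ᵥ Pi.single i c = Pi.single (σ i) (X (σ i) i * c) := by
  ext k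
  rw [Matrix.mulVec_single]
  by_cases hk : k = σ i
  · subst hk; simp
  · have hzero : X k i = 0 := by simpa using mt (hX i k).mp hk
    simp [hk, hzero]

lemma single_one_mem (hX : IsMonomial X σ) {W : Submodule K (ι → K)}
    (hW : ∀ v ∈ W, X *ᵥ v ∈ W) {i : ι} (hi : Pi.single i 1 ∈ W) : Pi.single (σ i) 1 ∈ W := by
  have h := hW _ hi
  rw [hX.mulVec_single, mul_one] at h
  exact single_one_mem_of_single_mem ((hX i (σ i)).mpr rfl) h

lemma mulVec_mem_span_single (hX : IsMonomial X σ) {S : Set ι} (hS : Set.MapsTo σ S S)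
    {v : ι → K} (hv : v ∈ Submodule.span K ((fun i => Pi.single i 1) '' S)) :
    X *ᵥ v ∈ Submodule.span K ((fun i => Pi.single i 1) '' S) := by
  induction hv using Submodule.span_induction with
  | mem _ h =>
    obtain ⟨i, hi, rfl⟩ := h
    have hsingle : Pi.single (σ i) (X (σ i) i * 1) = X (σ i) i • Pi.single (σ i) (1 : K) := by
      rw [← smul_eq_mul, Pi.single_smul']
    rw [hX.mulVec_single, hsingle]
    exact Submodule.smul_mem _ _ (Submodule.subset_span ⟨σ i, hS hi, rfl⟩)
  | zero => simp
  | add _ _ _ _ hx hy => rw [mulVec_add]; exact add_mem hx hy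
  | smul c _ _ hx => rw [mulVec_smul]; exact Submodule.smul_mem _ c hx

end IsMonomial

lemma isMonomial_diagonal_inv_pair {x : K} (hx : x ≠ 0) : IsMonomial (diagonal ![x, x⁻¹]) id :=
  isMonomial_diagonal (by simp [Fin.forall_fin_two, hx])

lemma det_diagonal_inv_pair {x : K} (hx : x ≠ 0) : (diagonal ![x, x⁻¹]).det = 1 := by
  simp [det_diagonal, hx]

lemma injective_vecCons_inv {x : K} (hx : x ≠ x⁻¹) : Function.Injective ![x, x⁻¹] := by
  intro i k
  fin_cases i <;> fin_cases k <;> simp [hx, hx.symm]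

end

lemma zeta_ne_zero (k : ℕ) : zeta k ≠ 0 := Complex.exp_ne_zero _

lemma zeta_sq_ne_inv {n : ℕ} (hn : 2 ≤ n) : zeta (4 * n) ^ 2 ≠ (zeta (4 * n) ^ 2)⁻¹ := by
  intro h
  have h4 : zeta (4 * n) ^ 4 = 1 := by
    rw [show 4 = 2 + 2 from rfl, pow_add]
    nth_rw 2 [h]
    exact mul_inv_cancel₀ (pow_ne_zero _ (zeta_ne_zero _))
  have hdvd := ((Complex.isPrimitiveRoot_exp (4 * n) (by omega)).pow_eq_one_iff_dvd 4).mp h4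
  have := Nat.le_of_dvd (by norm_num) hdvd
  omega

lemma isMonomial_Amat (n : ℕ) : IsMonomial (Amat n) id :=
  isMonomial_diagonal_inv_pair (pow_ne_zero _ (zeta_ne_zero _))

lemma isMonomial_Cmat (n : ℕ) : IsMonomial (Cmat n) id :=
  isMonomial_diagonal_inv_pair (pow_ne_zero _ (zeta_ne_zero _))

lemma isMonomial_Jmat : IsMonomial Jmat (· + 1) := by
  intro i k
  fin_cases i <;> fin_cases k <;> simp [Jmat]

lemma det_Amat (n : ℕ) : (Amat n).det = 1 :=
  det_diagonal_inv_pair (pow_ne_zero _ (zeta_ne_zero _))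

lemma det_Cmat (n : ℕ) : (Cmat n).det = 1 :=
  det_diagonal_inv_pair (pow_ne_zero _ (zeta_ne_zero _))

lemma det_Jmat : Jmat.det = 1 := by
  simp [Jmat, det_fin_two_of]

lemma intransGroup_le_invariantSubgroup (m n : ℕ) {S : Set (Fin 2 × Fin 2)}
    (hS : Set.MapsTo (Prod.map (· + 1) (· + 1)) S S) :
    intransGroup m n ≤ invariantSubgroup (Submodule.span ℂ ((fun q => Pi.single q 1) '' S)) := by
  rw [intransGroup, Subgroup.closure_le]
  rintro g (h | h | h | h) v hv <;> rw [h]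
  · exact ((isMonomial_Amat n).kronecker isMonomial_one).mulVec_mem_span_single (fun _ h => h) hv
  · exact (isMonomial_one.kronecker (isMonomial_Amat m)).mulVec_mem_span_single (fun _ h => h) hv
  · exact ((isMonomial_Cmat n).kronecker (isMonomial_Cmat m)).mulVec_mem_span_single
      (fun _ h => h) hv
  · exact (isMonomial_Jmat.kronecker isMonomial_Jmat).mulVec_mem_span_single hS hv

lemma eq_bot_or_eq_top_of_transGroup_invariant {m n : ℕ} (hm : 2 ≤ m) (hn : 2 ≤ n)
    (W : Submodule ℂ (Fin 2 × Fin 2 → ℂ))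
    (hW : ∀ g ∈ transGroup m n, ∀ v ∈ W, (g : Matrix (Fin 2 × Fin 2) (Fin 2 × Fin 2) ℂ) *ᵥ v ∈ W) :
    W = ⊥ ∨ W = ⊤ := by
  refine or_iff_not_imp_left.mpr fun hW0 => ?_
  obtain ⟨v, hvW, hv0⟩ := W.ne_bot_iff.mp hW0
  obtain ⟨⟨i, j⟩, hv⟩ := Function.ne_iff.mp hv0
  have hA := mulVec_mem_of_generator hW (M := Amat n ⊗ₖ 1)
    (by simp [det_kronecker, det_Amat]) (Or.inl rfl)
  have hB := mulVec_mem_of_generator hW (M := 1 ⊗ₖ Amat m)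
    (by simp [det_kronecker, det_Amat]) (Or.inr (Or.inl rfl))
  have hCJ := mulVec_mem_of_generator hW (M := Cmat n ⊗ₖ Jmat)
    (by simp [det_kronecker, det_Cmat, det_Jmat]) (Or.inr (Or.inr (Or.inl rfl)))
  have hJD := mulVec_mem_of_generator hW (M := Jmat ⊗ₖ Cmat m)
    (by simp [det_kronecker, det_Cmat, det_Jmat]) (Or.inr (Or.inr (Or.inr rfl)))
  rw [Amat, diagonal_kronecker_one] at hA
  rw [Amat, one_kronecker_diagonal] at hB
  have hsep : Function.Injective fun q : Fin 2 × Fin 2 =>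
      (![zeta (4 * n) ^ 2, (zeta (4 * n) ^ 2)⁻¹] q.1,
        ![zeta (4 * m) ^ 2, (zeta (4 * m) ^ 2)⁻¹] q.2) :=
    fun p q h => Prod.ext (injective_vecCons_inv (zeta_sq_ne_inv hn) congr(Prod.fst $h))
      (injective_vecCons_inv (zeta_sq_ne_inv hm) congr(Prod.snd $h))
  have hij : Pi.single (i, j) 1 ∈ W :=
    single_one_mem_of_single_mem hv (single_mem_of_diagonal_mulVec_mem hA hB hsep hvW (i, j))
  have hrow (q : Fin 2 × Fin 2) (hq : Pi.single q 1 ∈ W) : Pi.single (q.1, q.2 + 1) 1 ∈ W :=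
    ((isMonomial_Cmat n).kronecker isMonomial_Jmat).single_one_mem hCJ hq
  have hcol (q : Fin 2 × Fin 2) (hq : Pi.single q 1 ∈ W) : Pi.single (q.1 + 1, q.2) 1 ∈ W :=
    (isMonomial_Jmat.kronecker (isMonomial_Cmat m)).single_one_mem hJD hq
  refine eq_top_of_forall_single_one_mem ?_
  rintro ⟨k, l⟩
  have hFin2 : ∀ x y : Fin 2, x = y ∨ x = y + 1 := by decide
  rcases hFin2 k i with rfl | rfl <;> rcases hFin2 l j with rfl | rfl
  · exact hij
  · exact hrow _ hij
  · exact hcol _ hij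
  · exact hcol _ (hrow _ hij)

theorem stmt_14_general (m n : ℕ) (hm : 3 ≤ m) (hn : 3 ≤ n) :
    (∀ g ∈ intransGroup m n, ∀ v ∈ Submodule.span ℂ
        {Pi.single ((0 : Fin 2), (1 : Fin 2)) (1 : ℂ), Pi.single ((1 : Fin 2), (0 : Fin 2)) 1},
      Matrix.mulVec (g : Matrix (Fin 2 × Fin 2) (Fin 2 × Fin 2) ℂ) v ∈ Submodule.span ℂ
        {Pi.single ((0 : Fin 2), (1 : Fin 2)) (1 : ℂ), Pi.single ((1 : Fin 2), (0 : Fin 2)) 1}) ∧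
    (∀ g ∈ intransGroup m n, ∀ v ∈ Submodule.span ℂ
        {Pi.single ((0 : Fin 2), (0 : Fin 2)) (1 : ℂ), Pi.single ((1 : Fin 2), (1 : Fin 2)) 1},
      Matrix.mulVec (g : Matrix (Fin 2 × Fin 2) (Fin 2 × Fin 2) ℂ) v ∈ Submodule.span ℂ
        {Pi.single ((0 : Fin 2), (0 : Fin 2)) (1 : ℂ), Pi.single ((1 : Fin 2), (1 : Fin 2)) 1}) ∧
    ¬ (∀ W : Submodule ℂ (Fin 2 × Fin 2 → ℂ),
        (∀ g ∈ intransGroup m n, ∀ v ∈ W,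
          Matrix.mulVec (g : Matrix (Fin 2 × Fin 2) (Fin 2 × Fin 2) ℂ) v ∈ W) →
        W = ⊥ ∨ W = ⊤) ∧
    (∀ W : Submodule ℂ (Fin 2 × Fin 2 → ℂ),
      (∀ g ∈ transGroup m n, ∀ v ∈ W,
        Matrix.mulVec (g : Matrix (Fin 2 × Fin 2) (Fin 2 × Fin 2) ℂ) v ∈ W) →
      W = ⊥ ∨ W = ⊤) := by
  have hoff := intransGroup_le_invariantSubgroup m n
    (S := {((0 : Fin 2), (1 : Fin 2)), ((1 : Fin 2), (0 : Fin 2))}) (by simp [Set.MapsTo])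
  have hdiag := intransGroup_le_invariantSubgroup m n
    (S := {((0 : Fin 2), (0 : Fin 2)), ((1 : Fin 2), (1 : Fin 2))}) (by simp [Set.MapsTo])
  simp only [Set.image_pair] at hoff hdiag
  refine ⟨hoff, hdiag, fun hirr => ?_,
    eq_bot_or_eq_top_of_transGroup_invariant (by omega) (by omega)⟩
  rcases hirr _ hoff with hbot | htop
  · rw [Submodule.span_eq_bot] at hbot
    simpa using hbot _ (Set.mem_insert _ _)
  · have h00 := htop ▸ Submodule.mem_top (x := Pi.single ((0 : Fin 2), (0 : Fin 2)) (1 : ℂ))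
    rw [← Set.image_pair (fun q => Pi.single q (1 : ℂ)), single_one_mem_span_image_iff] at h00
    simp at h00

/-- For odd `m, n ≥ 3`, the group generated by `A ⊗ I`, `I ⊗ B`, `C ⊗ D`, `J ⊗ J`
acts reducibly on `ℂ⁴ = ℂ² ⊗ ℂ²` — it preserves `span{e₁⊗e₂, e₂⊗e₁}` and
`span{e₁⊗e₁, e₂⊗e₂}` — while the group generated by `A ⊗ I`, `I ⊗ B`, `C ⊗ J`, `J ⊗ D`
acts irreducibly. -/
theorem stmt_14 (m n : ℕ) (hm : 3 ≤ m) (hn : 3 ≤ n) (hmodd : Odd m) (hnodd : Odd n) :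
    (∀ g ∈ intransGroup m n, ∀ v ∈ Submodule.span ℂ
        {Pi.single ((0 : Fin 2), (1 : Fin 2)) (1 : ℂ), Pi.single ((1 : Fin 2), (0 : Fin 2)) 1},
      Matrix.mulVec (g : Matrix (Fin 2 × Fin 2) (Fin 2 × Fin 2) ℂ) v ∈ Submodule.span ℂ
        {Pi.single ((0 : Fin 2), (1 : Fin 2)) (1 : ℂ), Pi.single ((1 : Fin 2), (0 : Fin 2)) 1}) ∧
    (∀ g ∈ intransGroup m n, ∀ v ∈ Submodule.span ℂ
        {Pi.single ((0 : Fin 2), (0 : Fin 2)) (1 : ℂ), Pi.single ((1 : Fin 2), (1 : Fin 2)) 1},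
      Matrix.mulVec (g : Matrix (Fin 2 × Fin 2) (Fin 2 × Fin 2) ℂ) v ∈ Submodule.span ℂ
        {Pi.single ((0 : Fin 2), (0 : Fin 2)) (1 : ℂ), Pi.single ((1 : Fin 2), (1 : Fin 2)) 1}) ∧
    ¬ (∀ W : Submodule ℂ (Fin 2 × Fin 2 → ℂ),
        (∀ g ∈ intransGroup m n, ∀ v ∈ W,
          Matrix.mulVec (g : Matrix (Fin 2 × Fin 2) (Fin 2 × Fin 2) ℂ) v ∈ W) →
        W = ⊥ ∨ W = ⊤) ∧
    (∀ W : Submodule ℂ (Fin 2 × Fin 2 → ℂ),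
      (∀ g ∈ transGroup m n, ∀ v ∈ W,
        Matrix.mulVec (g : Matrix (Fin 2 × Fin 2) (Fin 2 × Fin 2) ℂ) v ∈ W) →
      W = ⊥ ∨ W = ⊤) :=
  stmt_14_general m n hm hn
end
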